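/- With the resonator coefficients f = f_M as defined, for every ε > 0 one has Σ_{nu ≤ M} f(u) f(nu) (log n)²/√n ≪_ε Q₁ (log M)^{1+ε} as M → ∞, where Q₁ = Π_p (1 + f(p)² + f(p)/√p). -/

import Mathlib

open Filter Finset
open scoped Classical

/-- `L = √(log M · log log M)` for the resonator parameter `M`. -/
noncomputable def resL (M : ℕ) : ℝ := Real.sqrt (Real.log M * Real.log (Real.log M))

/-- The value of the resonator coefficients at a prime `p`:
`f(p) = L/(√p log p)` if `L² ≤ p ≤ exp((log L)²)`, and `f(p) = 0` otherwise. -/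
noncomputable def resFp (M p : ℕ) : ℝ :=
  if resL M ^ 2 ≤ (p : ℝ) ∧ (p : ℝ) ≤ Real.exp (Real.log (resL M) ^ 2) then
    resL M / (Real.sqrt p * Real.log p)
  else 0

/-- The resonator coefficients `f = f_M`: the multiplicative function supported on squarefree
integers determined by its values `resFp` at primes. -/
noncomputable def resF (M n : ℕ) : ℝ :=
  if Squarefree n then ∏ p ∈ n.primeFactors, resFp M p else 0

/-- `Q₁ = Π_p (1 + f(p)² + f(p)/√p)`. -/
noncomputable def resQ1 (M : ℕ) : ℝ :=
  ∏ᶠ p ∈ {p : ℕ | p.Prime}, (1 + resFp M p ^ 2 + resFp M p / Real.sqrt p)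

/-- `Q₂ = Π_p (1 + f(p)²)`. -/
noncomputable def resQ2 (M : ℕ) : ℝ :=
  ∏ᶠ p ∈ {p : ℕ | p.Prime}, (1 + resFp M p ^ 2)

/-- The multiplicative function `g` supported on squarefree integers with `g(p) = 1 + f(p)²`. -/
noncomputable def resG (M n : ℕ) : ℝ :=
  if Squarefree n then ∏ p ∈ n.primeFactors, (1 + resFp M p ^ 2) else 0

/-!
Because `f` is supported on squarefree integers and multiplicative, `f(u) f(nu)` is `f(n) f(u)²`
when `nu` is squarefree and `0` otherwise, so the inner sum is at most
`f(n) ∏_{p ∤ n} (1 + f(p)²)`. Indexing squarefree `n` by their sets `S` of prime factors, the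
whole sum is then at most `∑_S ∏_{p ∈ S} a(p) ∏_{p ∉ S} b(p) (∑_{p ∈ S} log p)²` with
`a(p) = f(p)/√p` and `b(p) = 1 + f(p)²`; expanding the square and using `a + b ≥ 1`, this is at
most `Q₁ (D + T²)` with `T = ∑_p a(p) log p` and `D = ∑_p a(p) (log p)²`.
On the support `a(p) log p = L/p` and `log p ≤ (log L)²`, so comparing with the harmonic sum
gives `T ≤ 2 L (log L)²` and `D ≤ T (log L)²`, whence
`D + T² ≤ 6 L² (log L)⁴ ≤ 6 log M (log log M)⁵ ≪_ε (log M)^{1+ε}`.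
-/

section SubsetWeight

variable {ι : Type*} [DecidableEq ι] (a b : ι → ℝ)

def subsetWeight (P S : Finset ι) : ℝ := (∏ i ∈ S, a i) * ∏ i ∈ P \ S, b i

theorem sum_subsetWeight (P : Finset ι) :
    ∑ S ∈ P.powerset, subsetWeight a b P S = ∏ i ∈ P, (a i + b i) :=
  (prod_add a b P).symm

theorem sum_powerset_insert_subsetWeight_mul {x : ι} {s : Finset ι} (hx : x ∉ s)
    (g : Finset ι → ℝ) :
    ∑ S ∈ (insert x s).powerset, subsetWeight a b (insert x s) S * g S
      = ∑ S ∈ s.powerset, subsetWeight a b s S * (b x * g S + a x * g (insert x S)) := by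
  rw [sum_powerset_insert hx, ← sum_add_distrib]
  refine sum_congr rfl fun S hS => ?_
  have hxS : x ∉ S := fun h => hx (mem_powerset.mp hS h)
  have hxsS : x ∉ s \ S := fun h => hx (mem_sdiff.mp h).1
  simp only [subsetWeight, insert_sdiff_of_notMem _ hxS, insert_sdiff_insert,
    sdiff_insert_of_notMem hx, prod_insert hxS, prod_insert hxsS]
  ring

variable {a b} {l : ι → ℝ}

theorem sum_subsetWeight_mul_sum_le {P : Finset ι} (ha : ∀ i ∈ P, 0 ≤ a i)
    (hab : ∀ i ∈ P, 1 ≤ a i + b i) (hl : ∀ i ∈ P, 0 ≤ l i) :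
    ∑ S ∈ P.powerset, subsetWeight a b P S * ∑ i ∈ S, l i
      ≤ (∏ i ∈ P, (a i + b i)) * ∑ i ∈ P, a i * l i := by
  induction P using Finset.induction_on with
  | empty => simp
  | insert x s hx ih =>
    simp only [forall_mem_insert] at ha hab hl
    have hV := ih ha.2 hab.2 hl.2
    have hZ : 0 ≤ ∏ i ∈ s, (a i + b i) := prod_nonneg fun i hi => by linarith [hab.2 i hi]
    have hxl : 0 ≤ a x * l x := mul_nonneg ha.1 hl.1
    rw [sum_powerset_insert_subsetWeight_mul a b hx, prod_insert hx, sum_insert hx]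
    calc ∑ S ∈ s.powerset, subsetWeight a b s S *
            (b x * ∑ i ∈ S, l i + a x * ∑ i ∈ insert x S, l i)
        = ∑ S ∈ s.powerset, ((a x + b x) * (subsetWeight a b s S * ∑ i ∈ S, l i)
            + a x * l x * subsetWeight a b s S) := by
          refine sum_congr rfl fun S hS => ?_
          rw [sum_insert fun h => hx (mem_powerset.mp hS h)]
          ring
      _ = (a x + b x) * ∑ S ∈ s.powerset, subsetWeight a b s S * ∑ i ∈ S, l i
            + a x * l x * ∏ i ∈ s, (a i + b i) := by
          rw [sum_add_distrib, ← mul_sum, ← mul_sum, sum_subsetWeight]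
      _ ≤ (a x + b x) * ((∏ i ∈ s, (a i + b i)) * ∑ i ∈ s, a i * l i)
            + (a x + b x) * (a x * l x * ∏ i ∈ s, (a i + b i)) :=
          add_le_add (mul_le_mul_of_nonneg_left hV (by linarith [hab.1]))
            (le_mul_of_one_le_left (mul_nonneg hxl hZ) hab.1)
      _ = _ := by ring

theorem sum_subsetWeight_mul_sum_sq_le {P : Finset ι} (ha : ∀ i ∈ P, 0 ≤ a i)
    (hab : ∀ i ∈ P, 1 ≤ a i + b i) (hl : ∀ i ∈ P, 0 ≤ l i) :
    ∑ S ∈ P.powerset, subsetWeight a b P S * (∑ i ∈ S, l i) ^ 2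
      ≤ (∏ i ∈ P, (a i + b i))
          * (∑ i ∈ P, a i * l i ^ 2 + (∑ i ∈ P, a i * l i) ^ 2) := by
  induction P using Finset.induction_on with
  | empty => simp
  | insert x s hx ih =>
    simp only [forall_mem_insert] at ha hab hl
    have hV := sum_subsetWeight_mul_sum_le ha.2 hab.2 hl.2
    have hW := ih ha.2 hab.2 hl.2
    rw [sum_powerset_insert_subsetWeight_mul a b hx, prod_insert hx, sum_insert hx, sum_insert hx]
    set Z := ∏ i ∈ s, (a i + b i)
    set T := ∑ i ∈ s, a i * l i
    have hZ : 0 ≤ Z := prod_nonneg fun i hi => by linarith [hab.2 i hi]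
    have hT : 0 ≤ T := sum_nonneg fun i hi => mul_nonneg (ha.2 i hi) (hl.2 i hi)
    have hxl : 0 ≤ a x * l x := mul_nonneg ha.1 hl.1
    have hxl2 : 0 ≤ a x * l x ^ 2 := mul_nonneg ha.1 (sq_nonneg _)
    have hc : 0 ≤ a x + b x := by linarith [hab.1]
    calc ∑ S ∈ s.powerset, subsetWeight a b s S *
            (b x * (∑ i ∈ S, l i) ^ 2 + a x * (∑ i ∈ insert x S, l i) ^ 2)
        = ∑ S ∈ s.powerset, ((a x + b x) * (subsetWeight a b s S * (∑ i ∈ S, l i) ^ 2)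
            + 2 * (a x * l x) * (subsetWeight a b s S * ∑ i ∈ S, l i)
            + a x * l x ^ 2 * subsetWeight a b s S) := by
          refine sum_congr rfl fun S hS => ?_
          rw [sum_insert fun h => hx (mem_powerset.mp hS h)]
          ring
      _ = (a x + b x) * ∑ S ∈ s.powerset, subsetWeight a b s S * (∑ i ∈ S, l i) ^ 2
            + 2 * (a x * l x) * ∑ S ∈ s.powerset, subsetWeight a b s S * ∑ i ∈ S, l i
            + a x * l x ^ 2 * Z := by
          rw [sum_add_distrib, sum_add_distrib, ← mul_sum, ← mul_sum, ← mul_sum,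
            sum_subsetWeight]
      _ ≤ _ := by
          nlinarith [mul_le_mul_of_nonneg_left hW hc,
            mul_le_mul_of_nonneg_left hV (mul_nonneg zero_le_two hxl),
            mul_nonneg (sub_nonneg.2 hab.1) (mul_nonneg hZ hxl2),
            mul_nonneg (sub_nonneg.2 hab.1) (mul_nonneg hZ (mul_nonneg hxl hT)),
            mul_nonneg hc (mul_nonneg hZ (sq_nonneg (a x * l x)))]

end SubsetWeight

theorem sum_le_sum_powerset_primeFactors {A Q : Finset ℕ} {w : ℕ → ℝ}
    {W : Finset ℕ → ℝ} (hW : ∀ S ∈ Q.powerset, 0 ≤ W S)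
    (hw : ∀ u ∈ A, w u ≠ 0 →
      Squarefree u ∧ u.primeFactors ⊆ Q ∧ w u ≤ W u.primeFactors) :
    ∑ u ∈ A, w u ≤ ∑ S ∈ Q.powerset, W S := by
  rw [← sum_filter_ne_zero]
  have hw' : ∀ u ∈ A.filter (w · ≠ 0),
      Squarefree u ∧ u.primeFactors ⊆ Q ∧ w u ≤ W u.primeFactors := fun u hu =>
    hw u (mem_filter.mp hu).1 (mem_filter.mp hu).2
  have hinj : Set.InjOn Nat.primeFactors (A.filter (w · ≠ 0)) := fun x hx y hy hxy => by
    rw [← Nat.prod_primeFactors_of_squarefree (hw' x hx).1,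
      ← Nat.prod_primeFactors_of_squarefree (hw' y hy).1, hxy]
  calc ∑ u ∈ A.filter (w · ≠ 0), w u
      ≤ ∑ u ∈ A.filter (w · ≠ 0), W u.primeFactors := sum_le_sum fun u hu => (hw' u hu).2.2
    _ = ∑ S ∈ (A.filter (w · ≠ 0)).image Nat.primeFactors, W S := (sum_image hinj).symm
    _ ≤ ∑ S ∈ Q.powerset, W S := by
      refine sum_le_sum_of_subset_of_nonneg ?_ fun S hS _ => hW S hS
      simpa only [image_subset_iff, mem_powerset] using fun u hu => (hw' u hu).2.1

theorem Real.log_eq_sum_primeFactors_of_squarefree {n : ℕ} (hn : Squarefree n) :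
    Real.log n = ∑ p ∈ n.primeFactors, Real.log p := by
  conv_lhs => rw [← Nat.prod_primeFactors_of_squarefree hn, Nat.cast_prod]
  exact Real.log_prod fun p hp => Nat.cast_ne_zero.mpr (Nat.prime_of_mem_primeFactors hp).ne_zero

theorem Real.sqrt_eq_prod_primeFactors_of_squarefree {n : ℕ} (hn : Squarefree n) :
    √(n : ℝ) = ∏ p ∈ n.primeFactors, √(p : ℝ) := by
  conv_lhs => rw [← Nat.prod_primeFactors_of_squarefree hn, Nat.cast_prod]
  exact Real.sqrt_prod _ fun p _ => Nat.cast_nonneg p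

/-- A finite set of primes containing the support of `resFp M`: only the upper cutoff
`p ≤ exp ((log L)²)` matters for the estimates. -/
noncomputable def resPrimes (M : ℕ) : Finset ℕ :=
  {p ∈ Finset.Iic ⌊Real.exp (Real.log (resL M) ^ 2)⌋₊ | p.Prime}

noncomputable def resA (M p : ℕ) : ℝ := resFp M p / √(p : ℝ)

noncomputable def resT (M : ℕ) : ℝ := ∑ p ∈ resPrimes M, resA M p * Real.log p

noncomputable def resD (M : ℕ) : ℝ := ∑ p ∈ resPrimes M, resA M p * Real.log p ^ 2

theorem resFp_nonneg (M p : ℕ) : 0 ≤ resFp M p := by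
  unfold resFp
  split_ifs
  · exact div_nonneg (Real.sqrt_nonneg _)
      (mul_nonneg (Real.sqrt_nonneg _) (Real.log_natCast_nonneg p))
  · exact le_rfl

theorem resA_nonneg (M p : ℕ) : 0 ≤ resA M p :=
  div_nonneg (resFp_nonneg M p) (Real.sqrt_nonneg _)

theorem resF_nonneg (M n : ℕ) : 0 ≤ resF M n := by
  unfold resF
  split_ifs
  · exact prod_nonneg fun p _ => resFp_nonneg M p
  · exact le_rfl

theorem mem_resPrimes {M p : ℕ} (hp : p.Prime) (h : resFp M p ≠ 0) : p ∈ resPrimes M := by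
  unfold resFp at h
  split_ifs at h with hrange
  · exact mem_filter.mpr ⟨mem_Iic.mpr (Nat.le_floor hrange.2), hp⟩
  · exact absurd rfl h

theorem log_le_of_mem_resPrimes {M p : ℕ} (hp : p ∈ resPrimes M) :
    Real.log p ≤ Real.log (resL M) ^ 2 := by
  obtain ⟨hfloor, hprime⟩ := mem_filter.mp hp
  have hpX : (p : ℝ) ≤ Real.exp (Real.log (resL M) ^ 2) :=
    (Nat.le_floor_iff (Real.exp_pos _).le).mp (mem_Iic.mp hfloor)
  simpa using Real.log_le_log (Nat.cast_pos.mpr hprime.pos) hpX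

theorem squarefree_and_primeFactors_subset_of_resF_ne_zero {M n : ℕ} (h : resF M n ≠ 0) :
    Squarefree n ∧ n.primeFactors ⊆ resPrimes M := by
  unfold resF at h
  split_ifs at h with hn
  · exact ⟨hn, fun p hp => mem_resPrimes (Nat.prime_of_mem_primeFactors hp)
      fun h0 => h (prod_eq_zero hp h0)⟩
  · exact absurd rfl h

theorem resF_mul {M n u : ℕ} (h : Squarefree (n * u)) :
    resF M (n * u) = resF M n * resF M u := by
  obtain ⟨hco, hn, hu⟩ := Nat.squarefree_mul_iff.mp h
  simp only [resF, if_pos h, if_pos hn, if_pos hu, Nat.primeFactors_mul hn.ne_zero hu.ne_zero,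
    prod_union hco.disjoint_primeFactors]

theorem resF_div_sqrt {M n : ℕ} (hn : Squarefree n) :
    resF M n / √(n : ℝ) = ∏ p ∈ n.primeFactors, resA M p := by
  rw [resF, if_pos hn, Real.sqrt_eq_prod_primeFactors_of_squarefree hn, ← prod_div_distrib]
  rfl

theorem resQ1_eq_prod (M : ℕ) :
    resQ1 M = ∏ p ∈ resPrimes M, (resA M p + (1 + resFp M p ^ 2)) := by
  rw [resQ1, finprod_mem_eq_prod_of_subset]
  · exact prod_congr rfl fun p _ => by rw [resA]; ring
  · rintro p ⟨hp, hne⟩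
    refine mem_resPrimes hp fun h0 => hne ?_
    simp [h0]
  · exact fun p hp => (mem_filter.mp hp).2

theorem resQ1_nonneg (M : ℕ) : 0 ≤ resQ1 M := by
  rw [resQ1_eq_prod]
  exact prod_nonneg fun p _ => by have := resA_nonneg M p; positivity

noncomputable def resonatorSum (M : ℕ) : ℝ :=
  ∑ n ∈ Finset.Icc 1 M, ∑ u ∈ Finset.Icc 1 (M / n),
    resF M u * resF M (n * u) * Real.log n ^ 2 / Real.sqrt n

theorem resonatorSum_nonneg (M : ℕ) : 0 ≤ resonatorSum M :=
  sum_nonneg fun n _ => sum_nonneg fun u _ => by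
    have := resF_nonneg M u
    have := resF_nonneg M (n * u)
    positivity

theorem sum_resF_mul_resF_mul_le (M n : ℕ) (A : Finset ℕ) :
    ∑ u ∈ A, resF M u * resF M (n * u)
      ≤ resF M n * ∏ p ∈ resPrimes M \ n.primeFactors, (1 + resFp M p ^ 2) := by
  rw [prod_one_add, mul_sum]
  refine sum_le_sum_powerset_primeFactors
    (fun S _ => mul_nonneg (resF_nonneg M n) (prod_nonneg fun p _ => sq_nonneg _))
    fun u _ h => ?_
  have hsf := (squarefree_and_primeFactors_subset_of_resF_ne_zero (right_ne_zero_of_mul h)).1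
  obtain ⟨hco, -, hu⟩ := Nat.squarefree_mul_iff.mp hsf
  refine ⟨hu, fun p hp => mem_sdiff.mpr ⟨?_, ?_⟩, ?_⟩
  · exact (squarefree_and_primeFactors_subset_of_resF_ne_zero (left_ne_zero_of_mul h)).2 hp
  · exact fun hpn => disjoint_left.mp hco.disjoint_primeFactors hpn hp
  · rw [resF_mul hsf, resF, if_pos hu, prod_pow]
    exact le_of_eq (by ring)

theorem resonatorSum_le_sum_subsetWeight (M : ℕ) :
    resonatorSum M ≤ ∑ S ∈ (resPrimes M).powerset,
          subsetWeight (resA M) (fun p => 1 + resFp M p ^ 2) (resPrimes M) S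
            * (∑ p ∈ S, Real.log p) ^ 2 := by
  calc _ ≤ ∑ n ∈ Finset.Icc 1 M,
          (resF M n * ∏ p ∈ resPrimes M \ n.primeFactors, (1 + resFp M p ^ 2))
            * (Real.log n ^ 2 / √(n : ℝ)) := by
        refine sum_le_sum fun n _ => ?_
        simp only [mul_div_assoc, ← sum_mul]
        exact mul_le_mul_of_nonneg_right (sum_resF_mul_resF_mul_le M n _) (by positivity)
    _ ≤ _ := by
        refine sum_le_sum_powerset_primeFactors
          (fun S _ => mul_nonneg (mul_nonneg (prod_nonneg fun p _ => resA_nonneg M p)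
            (prod_nonneg fun p _ => by positivity)) (sq_nonneg _)) fun n _ h => ?_
        obtain ⟨hn, hsub⟩ := squarefree_and_primeFactors_subset_of_resF_ne_zero
          fun h0 : resF M n = 0 => h (by rw [h0, zero_mul, zero_mul])
        refine ⟨hn, hsub, le_of_eq ?_⟩
        rw [subsetWeight, ← resF_div_sqrt hn, ← Real.log_eq_sum_primeFactors_of_squarefree hn]
        ring

theorem resonatorSum_le (M : ℕ) : resonatorSum M ≤ resQ1 M * (resD M + resT M ^ 2) := by
  refine (resonatorSum_le_sum_subsetWeight M).trans ?_
  rw [resQ1_eq_prod]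
  exact sum_subsetWeight_mul_sum_sq_le (fun p _ => resA_nonneg M p)
    (fun p _ => by have := resA_nonneg M p; nlinarith [sq_nonneg (resFp M p)])
    fun p _ => Real.log_natCast_nonneg p

theorem resA_mul_log_le (M : ℕ) {p : ℕ} (hp : p.Prime) :
    resA M p * Real.log p ≤ resL M / p := by
  have hlog : 0 < Real.log p := Real.log_pos (Nat.one_lt_cast.mpr hp.one_lt)
  unfold resA resFp
  split_ifs
  · refine le_of_eq ?_
    field_simp
    rw [Real.sq_sqrt (Nat.cast_nonneg p)]
  · simp only [zero_div, zero_mul]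
    exact div_nonneg (Real.sqrt_nonneg _) (Nat.cast_nonneg p)

theorem resT_le (M : ℕ) : resT M ≤ resL M * (1 + Real.log (resL M) ^ 2) := by
  set N := ⌊Real.exp (Real.log (resL M) ^ 2)⌋₊
  have hN : 0 < N := Nat.floor_pos.mpr (Real.one_le_exp (sq_nonneg _))
  have hL : 0 ≤ resL M := Real.sqrt_nonneg _
  calc resT M ≤ ∑ p ∈ resPrimes M, resL M / p :=
        sum_le_sum fun p hp => resA_mul_log_le M (mem_filter.mp hp).2
    _ ≤ ∑ d ∈ Finset.Icc 1 N, resL M / d := by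
        refine sum_le_sum_of_subset_of_nonneg (fun p hp => ?_) fun d _ _ => by positivity
        obtain ⟨hpN, hprime⟩ := mem_filter.mp hp
        exact mem_Icc.mpr ⟨hprime.one_le, mem_Iic.mp hpN⟩
    _ = resL M * harmonic N := by
        simp only [harmonic_eq_sum_Icc, Rat.cast_sum, Rat.cast_inv, Rat.cast_natCast, mul_sum,
          div_eq_mul_inv]
    _ ≤ resL M * (1 + Real.log N) := mul_le_mul_of_nonneg_left (harmonic_le_one_add_log N) hL
    _ ≤ resL M * (1 + Real.log (resL M) ^ 2) := by
        gcongr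
        calc Real.log N ≤ Real.log (Real.exp (Real.log (resL M) ^ 2)) :=
              Real.log_le_log (Nat.cast_pos.mpr hN) (Nat.floor_le (Real.exp_pos _).le)
          _ = Real.log (resL M) ^ 2 := Real.log_exp _

theorem resD_le (M : ℕ) : resD M ≤ resT M * Real.log (resL M) ^ 2 := by
  rw [resT, sum_mul]
  refine sum_le_sum fun p hp => ?_
  rw [pow_two, ← mul_assoc]
  exact mul_le_mul_of_nonneg_left (log_le_of_mem_resPrimes hp)
    (mul_nonneg (resA_nonneg M p) (Real.log_natCast_nonneg p))

theorem one_lt_resL {M : ℕ} (h : 0 < Real.log (resL M)) : 1 < resL M :=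
  (Real.log_pos_iff (Real.sqrt_nonneg _)).mp h

theorem resD_add_resT_sq_le {M : ℕ} (h : 1 ≤ Real.log (resL M)) :
    resD M + resT M ^ 2 ≤ 6 * resL M ^ 2 * Real.log (resL M) ^ 4 := by
  have hL := one_lt_resL (M := M) (by linarith)
  have hT0 : 0 ≤ resT M :=
    sum_nonneg fun p _ => mul_nonneg (resA_nonneg M p) (Real.log_natCast_nonneg p)
  have hT : resT M ≤ 2 * resL M * Real.log (resL M) ^ 2 :=
    (resT_le M).trans (by nlinarith [show 1 ≤ Real.log (resL M) ^ 2 by nlinarith])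
  calc resD M + resT M ^ 2 ≤ resT M * Real.log (resL M) ^ 2 + resT M ^ 2 := by
        linarith [resD_le M]
    _ ≤ 2 * resL M * Real.log (resL M) ^ 2 * Real.log (resL M) ^ 2
          + (2 * resL M * Real.log (resL M) ^ 2) ^ 2 := by gcongr
    _ ≤ 6 * resL M ^ 2 * Real.log (resL M) ^ 4 := by
        nlinarith [mul_le_mul_of_nonneg_right (show resL M ≤ resL M ^ 2 by nlinarith)
          (pow_nonneg (show (0 : ℝ) ≤ Real.log (resL M) by linarith) 4)]

theorem resL_sq_mul_log_pow_le {M : ℕ} (hM : 1 ≤ Real.log M) (h : 1 ≤ Real.log (resL M)) :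
    resL M ^ 2 * Real.log (resL M) ^ 4 ≤ Real.log M * Real.log (Real.log M) ^ 5 := by
  have hloglog : 0 ≤ Real.log (Real.log M) := Real.log_nonneg hM
  have hL : 0 < resL M := zero_lt_one.trans (one_lt_resL (by linarith))
  have hLle : resL M ≤ Real.log M := by
    calc resL M ≤ √(Real.log M * Real.log M) := Real.sqrt_le_sqrt
          (mul_le_mul_of_nonneg_left (Real.log_le_self (by linarith)) (by linarith))
      _ = Real.log M := Real.sqrt_mul_self (by linarith)
  have hsq : resL M ^ 2 = Real.log M * Real.log (Real.log M) :=
    Real.sq_sqrt (mul_nonneg (by linarith) hloglog)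
  calc resL M ^ 2 * Real.log (resL M) ^ 4
      ≤ resL M ^ 2 * Real.log (Real.log M) ^ 4 := by gcongr
    _ = Real.log M * Real.log (Real.log M) ^ 5 := by rw [hsq]; ring

theorem tendsto_log_natCast_atTop : Tendsto (fun M : ℕ => Real.log M) atTop atTop :=
  Real.tendsto_log_atTop.comp tendsto_natCast_atTop_atTop

theorem tendsto_resL_atTop : Tendsto resL atTop atTop :=
  Real.tendsto_sqrt_atTop.comp (tendsto_log_natCast_atTop.atTop_mul_atTop₀
    (Real.tendsto_log_atTop.comp tendsto_log_natCast_atTop))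

theorem eventually_resD_add_resT_sq_le :
    ∀ᶠ M : ℕ in atTop,
      resD M + resT M ^ 2 ≤ 6 * (Real.log M * Real.log (Real.log M) ^ 5) := by
  filter_upwards [tendsto_log_natCast_atTop.eventually_ge_atTop 1,
    (Real.tendsto_log_atTop.comp tendsto_resL_atTop).eventually_ge_atTop 1] with M hM hL
  linarith [resD_add_resT_sq_le hL, resL_sq_mul_log_pow_le hM hL]

theorem isBigO_log_mul_log_log_pow {ε : ℝ} (hε : 0 < ε) :
    (fun M : ℕ => Real.log M * Real.log (Real.log M) ^ 5)
      =O[atTop] fun M : ℕ => Real.log M ^ ((1 : ℝ) + ε) := by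
  have h := (Asymptotics.isBigO_refl (fun M : ℕ => Real.log M) atTop).mul
    ((isLittleO_log_rpow_rpow_atTop 5 hε).comp_tendsto tendsto_log_natCast_atTop).isBigO
  refine h.congr' (Eventually.of_forall fun M => ?_) ?_
  · simp only [Function.comp_apply]
    norm_cast
  · filter_upwards [tendsto_log_natCast_atTop.eventually_gt_atTop 0] with M hM
    simp [Real.rpow_add hM]

/-- With the resonator coefficients `f = f_M` as defined, for every `ε > 0`
one has `Σ_{nu ≤ M} f(u) f(nu) (log n)²/√n ≪_ε Q₁ (log M)^{1+ε}` as `M → ∞`. -/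
theorem resonator_logSq_weighted_sum (ε : ℝ) (hε : 0 < ε) :
    (fun M : ℕ =>
        ∑ n ∈ Finset.Icc 1 M, ∑ u ∈ Finset.Icc 1 (M / n),
          resF M u * resF M (n * u) * Real.log n ^ 2 / Real.sqrt n)
      =O[atTop] fun M : ℕ => resQ1 M * Real.log M ^ ((1 : ℝ) + ε) := by
  have hbound : ∀ᶠ M : ℕ in atTop,
      ‖resonatorSum M‖ ≤ 6 * ‖resQ1 M * (Real.log M * Real.log (Real.log M) ^ 5)‖ := by
    filter_upwards [eventually_resD_add_resT_sq_le,
      tendsto_log_natCast_atTop.eventually_ge_atTop 1] with M hDT hM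
    have hloglog : 0 ≤ Real.log (Real.log M) := Real.log_nonneg hM
    have hQ := resQ1_nonneg M
    rw [Real.norm_of_nonneg (resonatorSum_nonneg M), Real.norm_of_nonneg (by positivity)]
    calc resonatorSum M ≤ resQ1 M * (resD M + resT M ^ 2) := resonatorSum_le M
      _ ≤ resQ1 M * (6 * (Real.log M * Real.log (Real.log M) ^ 5)) := by gcongr
      _ = _ := by ring
  exact (Asymptotics.IsBigO.of_bound 6 hbound).trans
    ((Asymptotics.isBigO_refl resQ1 atTop).mul (isBigO_log_mul_log_log_pow hε))
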